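/- Let α > 0. The explicit formula f(x) = (1/α)·(log(e^{2πα}∫₀ˣ e^{u(s)}ds + ∫ₓ^{2π} e^{u(s)}ds) + log(α/(e^{2πα}-1))) defines a two-sided inverse to the map q_α : f ↦ αf + log f' between {f smooth : f' > 0, f(x+2π)=f(x)+2π} and {u smooth : u(x+2π)=u(x)+2πα}. -/

import Mathlib

open Real MeasureTheory intervalIntegral NNReal ENNReal

lemma hasDerivAt_primitive {g : ℝ → ℝ} (hg : Continuous g) (a x : ℝ) :
    HasDerivAt (fun y => ∫ s in a..y, g s) (g x) x :=
  intervalIntegral.integral_hasDerivAt_right (hg.intervalIntegrable a x)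
    (hg.stronglyMeasurable.stronglyMeasurableAtFilter) hg.continuousAt

lemma contDiff_primitive {g : ℝ → ℝ} (hg : ContDiff ℝ (⊤ : ℕ∞) g) :
    ContDiff ℝ (⊤ : ℕ∞) (fun x => ∫ s in (0:ℝ)..x, g s) := by
  have hc := hg.continuous
  rw [contDiff_infty_iff_deriv]
  have hd : deriv (fun x => ∫ s in (0:ℝ)..x, g s) = g :=
    funext fun x => (hasDerivAt_primitive hc 0 x).deriv
  rw [hd]
  exact ⟨fun x => (hasDerivAt_primitive hc 0 x).differentiableAt, hg⟩

/-- The set of lifts of orientation-preserving circle diffeomorphisms. -/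
def DiffSet : Set (ℝ → ℝ) :=
  {f | ContDiff ℝ (⊤ : ℕ∞) f ∧ (∀ x, 0 < deriv f x) ∧ ∀ x, f (x + 2*π) = f x + 2*π}

/-- The set Ã_α of quasi-periodic functions. -/
def ASet (α : ℝ) : Set (ℝ → ℝ) :=
  {u | ContDiff ℝ (⊤ : ℕ∞) u ∧ ∀ x, u (x + 2*π) = u x + 2*π*α}

/-- The map q_α. -/
noncomputable def qMap (α : ℝ) (f : ℝ → ℝ) : ℝ → ℝ := fun x =>
  α * f x + Real.log (deriv f x)

/-- The claimed inverse of q_α. -/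
noncomputable def qInv (α : ℝ) (u : ℝ → ℝ) : ℝ → ℝ := fun x =>
  (1/α) * (Real.log ((Real.exp (2*π*α) * ∫ s in (0:ℝ)..x, Real.exp (u s))
      + ∫ s in x..(2*π), Real.exp (u s))
    + Real.log (α / (Real.exp (2*π*α) - 1)))

theorem q_alpha_two_sided_inverse (α : ℝ) (hα : 0 < α) :
    (∀ f ∈ DiffSet, qMap α f ∈ ASet α ∧ qInv α (qMap α f) = f) ∧
    (∀ u ∈ ASet α, qInv α u ∈ DiffSet ∧ qMap α (qInv α u) = u) := by
  have hπ : 0 < π := Real.pi_pos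
  have h2πα : 0 < 2*π*α := by positivity
  have hE : (0:ℝ) < Real.exp (2*π*α) - 1 := by
    have := Real.add_one_lt_exp (ne_of_gt h2πα)
    linarith
  constructor
  · -- Direction 1
    rintro f ⟨hf_sm, hf_pos, hf_per⟩
    have hf_diff : Differentiable ℝ f := hf_sm.differentiable (by simp)
    have hderiv_sm : ContDiff ℝ (⊤ : ℕ∞) (deriv f) := by
      exact (contDiff_infty_iff_deriv.mp hf_sm).2
    have hf_sm' : ContDiff ℝ (⊤ : ℕ∞) f := by
      exact hf_sm
    have hu_sm : ContDiff ℝ (⊤ : ℕ∞) (qMap α f) := by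
      unfold qMap
      exact (contDiff_const.mul hf_sm').add (hderiv_sm.log fun x => (hf_pos x).ne')
    have hderiv_per : ∀ x, deriv f (x + 2*π) = deriv f x := by
      intro x
      have h1 : (fun y => f (y + 2*π)) = fun y => f y + 2*π := funext hf_per
      have h3 := congrFun (congrArg deriv h1) x
      rwa [deriv_comp_add_const, deriv_add_const] at h3
    have hu_per : ∀ x, qMap α f (x + 2*π) = qMap α f x + 2*π*α := by
      intro x; unfold qMap; rw [hf_per, hderiv_per]; ring
    refine ⟨⟨hu_sm, hu_per⟩, ?_⟩
    funext x
    have hexp : ∀ s, Real.exp (qMap α f s) = Real.exp (α * f s) * deriv f s := by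
      intro s; unfold qMap; rw [Real.exp_add, Real.exp_log (hf_pos s)]
    have hcont : Continuous fun s => Real.exp (qMap α f s) :=
      Real.continuous_exp.comp hu_sm.continuous
    have hFTC : ∀ a b : ℝ, (∫ s in a..b, Real.exp (qMap α f s))
        = (Real.exp (α * f b) - Real.exp (α * f a)) / α := by
      intro a b
      have h1 : ∀ s ∈ Set.uIcc a b, HasDerivAt (fun y => Real.exp (α * f y) / α)
          (Real.exp (qMap α f s)) s := by
        intro s _
        have hd : HasDerivAt f (deriv f s) s := (hf_diff s).hasDerivAt
        have h5 := ((hd.const_mul α).exp).div_const α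
        refine h5.congr_deriv ?_
        rw [hexp]
        field_simp
      rw [intervalIntegral.integral_eq_sub_of_hasDerivAt h1 (hcont.intervalIntegrable a b)]
      ring
    have hf2π : f (2*π) = f 0 + 2*π := by
      have := hf_per 0; rwa [zero_add] at this
    show (1/α) * (Real.log ((Real.exp (2*π*α) * ∫ s in (0:ℝ)..x, Real.exp (qMap α f s))
      + ∫ s in x..(2*π), Real.exp (qMap α f s))
      + Real.log (α / (Real.exp (2*π*α) - 1))) = f x
    rw [hFTC 0 x, hFTC x (2*π), hf2π]
    have hval : Real.exp (2*π*α) * ((Real.exp (α * f x) - Real.exp (α * f 0)) / α)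
        + (Real.exp (α * (f 0 + 2*π)) - Real.exp (α * f x)) / α
        = Real.exp (α * f x) * ((Real.exp (2*π*α) - 1) / α) := by
      have : Real.exp (α * (f 0 + 2*π)) = Real.exp (α * f 0) * Real.exp (2*π*α) := by
        rw [← Real.exp_add]; ring_nf
      rw [this]
      field_simp
      ring
    rw [hval, Real.log_mul (Real.exp_ne_zero _) (by positivity), Real.log_exp,
      Real.log_div hE.ne' hα.ne', Real.log_div hα.ne' hE.ne']
    field_simp
    ring
  · -- Direction 2
    rintro u ⟨hu_sm, hu_per⟩
    set g : ℝ → ℝ := fun s => Real.exp (u s) with hg_def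
    have hg_sm : ContDiff ℝ (⊤ : ℕ∞) g := hu_sm.exp
    have hgc : Continuous g := hg_sm.continuous
    set G : ℝ → ℝ := fun x => ∫ s in (0:ℝ)..x, g s with hG_def
    have hG_sm : ContDiff ℝ (⊤ : ℕ∞) G := contDiff_primitive hg_sm
    have hG_deriv : ∀ x, HasDerivAt G (g x) x := fun x => hasDerivAt_primitive hgc 0 x
    set C : ℝ := G (2*π) with hC_def
    have hC_pos : 0 < C :=
      intervalIntegral_pos_of_pos (hgc.intervalIntegrable _ _)
        (fun s => Real.exp_pos _) (by positivity)
    set F : ℝ → ℝ := fun x => (Real.exp (2*π*α) - 1) * G x + C with hF_def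
    have hF_sm : ContDiff ℝ (⊤ : ℕ∞) F := (contDiff_const.mul hG_sm).add contDiff_const
    have hF_deriv : ∀ x, HasDerivAt F ((Real.exp (2*π*α) - 1) * g x) x := fun x =>
      ((hG_deriv x).const_mul _).add_const C
    have hG_shift : ∀ x, G (x + 2*π) = C + Real.exp (2*π*α) * G x := by
      intro x
      have h1 : G (x + 2*π) = G (2*π) + ∫ s in (2*π)..(x + 2*π), g s :=
        (intervalIntegral.integral_add_adjacent_intervals (hgc.intervalIntegrable _ _)
          (hgc.intervalIntegrable _ _)).symm
      have h2 : (∫ s in (2*π)..(x + 2*π), g s) = ∫ s in (0:ℝ)..x, g (s + 2*π) := by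
        rw [integral_comp_add_right g (2*π)]
        norm_num
      have h3 : (∫ s in (0:ℝ)..x, g (s + 2*π)) = Real.exp (2*π*α) * G x := by
        rw [← intervalIntegral.integral_const_mul]
        apply intervalIntegral.integral_congr
        intro s _
        show Real.exp (u (s + 2*π)) = Real.exp (2*π*α) * Real.exp (u s)
        rw [hu_per s, Real.exp_add]
        ring
      rw [h1, h2, h3, ← hC_def]
    have hF_per : ∀ x, F (x + 2*π) = Real.exp (2*π*α) * F x := by
      intro x
      show (Real.exp (2*π*α) - 1) * G (x + 2*π) + C
        = Real.exp (2*π*α) * ((Real.exp (2*π*α) - 1) * G x + C)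
      rw [hG_shift]
      ring
    have hF_mono : StrictMono F := by
      apply strictMono_of_deriv_pos
      intro x
      rw [(hF_deriv x).deriv]
      exact mul_pos hE (Real.exp_pos _)
    have hF0 : F 0 = C := by
      show (Real.exp (2*π*α) - 1) * G 0 + C = C
      have : G 0 = 0 := intervalIntegral.integral_same
      rw [this]; ring
    have key : ∀ n : ℕ, ∀ x : ℝ, -(2*π) * n ≤ x → 0 < F x := by
      intro n
      induction n with
      | zero =>
        intro x hx
        simp only [Nat.cast_zero, mul_zero] at hx
        calc 0 < C := hC_pos
          _ = F 0 := hF0.symm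
          _ ≤ F x := hF_mono.monotone hx
      | succ n ih =>
        intro x hx
        have h1 : -(2*π) * n ≤ x + 2*π := by
          push_cast at hx ⊢
          nlinarith [hπ]
        have h2 := ih _ h1
        rw [hF_per x] at h2
        rcases mul_pos_iff.mp h2 with ⟨_, h⟩ | ⟨hneg, _⟩
        · exact h
        · exact absurd hneg (not_lt.mpr (Real.exp_pos _).le)
    have hF_pos : ∀ x, 0 < F x := by
      intro x
      obtain ⟨n, hn⟩ := exists_nat_ge ((-x) / (2*π))
      apply key n
      rw [div_le_iff₀ (by positivity)] at hn
      nlinarith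
    -- rewrite qInv
    have hsplit : ∀ x, (∫ s in x..(2*π), g s) = C - G x := by
      intro x
      have := intervalIntegral.integral_add_adjacent_intervals (μ := volume)
        (hgc.intervalIntegrable 0 x) (hgc.intervalIntegrable x (2*π))
      show (∫ s in x..(2*π), g s) = C - G x
      rw [hC_def]
      show (∫ s in x..(2*π), g s) = (G (2*π)) - G x
      linarith [this]
    have hqinv : qInv α u = fun x => (1/α) * (Real.log (F x)
        + Real.log (α / (Real.exp (2*π*α) - 1))) := by
      funext x
      show (1/α) * (Real.log ((Real.exp (2*π*α) * G x) + ∫ s in x..(2*π), g s)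
        + Real.log (α / (Real.exp (2*π*α) - 1))) = _
      rw [hsplit x]
      have : Real.exp (2*π*α) * G x + (C - G x) = F x := by
        show _ = (Real.exp (2*π*α) - 1) * G x + C
        ring
      rw [this]
    have hf_hasderiv : ∀ x, HasDerivAt (qInv α u)
        ((1/α) * ((Real.exp (2*π*α) - 1) * g x / F x)) x := by
      intro x
      rw [hqinv]
      exact (((hF_deriv x).log (hF_pos x).ne').add_const _).const_mul (1/α)
    have hf_deriv : ∀ x, deriv (qInv α u) x
        = (1/α) * ((Real.exp (2*π*α) - 1) * g x / F x) := fun x => (hf_hasderiv x).deriv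
    have hf_sm : ContDiff ℝ (⊤ : ℕ∞) (qInv α u) := by
      rw [hqinv]
      exact contDiff_const.mul ((hF_sm.log fun x => (hF_pos x).ne').add contDiff_const)
    have hf_dpos : ∀ x, 0 < deriv (qInv α u) x := by
      intro x
      rw [hf_deriv]
      have := Real.exp_pos (u x)
      have := hF_pos x
      positivity
    have hf_per : ∀ x, qInv α u (x + 2*π) = qInv α u x + 2*π := by
      intro x
      rw [hqinv]
      show (1/α) * (Real.log (F (x + 2*π)) + _) = (1/α) * (Real.log (F x) + _) + 2*π
      rw [hF_per x, Real.log_mul (Real.exp_ne_zero _) (hF_pos x).ne', Real.log_exp]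
      field_simp
      ring
    refine ⟨⟨hf_sm, hf_dpos, hf_per⟩, ?_⟩
    funext x
    show α * qInv α u x + Real.log (deriv (qInv α u) x) = u x
    rw [hf_deriv, hqinv]
    show α * ((1/α) * (Real.log (F x) + Real.log (α / (Real.exp (2*π*α) - 1))))
      + Real.log ((1/α) * ((Real.exp (2*π*α) - 1) * g x / F x)) = u x
    have h1 : α * ((1/α) * (Real.log (F x) + Real.log (α / (Real.exp (2*π*α) - 1))))
        = Real.log (F x) + Real.log (α / (Real.exp (2*π*α) - 1)) := by
      field_simp
    have h2 : (1/α) * ((Real.exp (2*π*α) - 1) * g x / F x)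
        = ((Real.exp (2*π*α) - 1) * g x) / (α * F x) := by
      field_simp
    have hgx0 : g x ≠ 0 := (Real.exp_pos (u x)).ne'
    rw [h1, h2, Real.log_div hα.ne' hE.ne',
      Real.log_div (mul_ne_zero hE.ne' hgx0) (mul_ne_zero hα.ne' (hF_pos x).ne'),
      Real.log_mul hE.ne' hgx0, Real.log_mul hα.ne' (hF_pos x).ne']
    have hlg : Real.log (g x) = u x := Real.log_exp (u x)
    rw [hlg]
    ring
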